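/- The group G₃ = ⟨x, y | x y x = y x y, y = x⁻³ y x³⟩ is not circularly orderable. -/
import Mathlib

universe u

/-- A group is circularly orderable if it admits a left-invariant circular order cocycle. -/
def IsCircularlyOrderable (G : Type u) [Group G] : Prop :=
  ∃ c : G → G → G → ℤ,
    (∀ g₁ g₂ g₃ : G, c g₁ g₂ g₃ = -1 ∨ c g₁ g₂ g₃ = 0 ∨ c g₁ g₂ g₃ = 1) ∧
    (∀ g₁ g₂ g₃ : G, c g₁ g₂ g₃ = 0 ↔ g₁ = g₂ ∨ g₁ = g₃ ∨ g₂ = g₃) ∧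
    (∀ g₁ g₂ g₃ g₄ : G, c g₂ g₃ g₄ - c g₁ g₃ g₄ + c g₁ g₂ g₄ - c g₁ g₂ g₃ = 0) ∧
    (∀ h g₁ g₂ g₃ : G, c g₁ g₂ g₃ = c (h * g₁) (h * g₂) (h * g₃))

/-- The relators of the virtual knot group
`G₃ = ⟨x, y | x y x = y x y, y = x⁻³ y x³⟩` (generators: `x = of 0`, `y = of 1`). -/
def G3Rels : Set (FreeGroup (Fin 2)) :=
  {FreeGroup.of 0 * FreeGroup.of 1 * FreeGroup.of 0 *
     (FreeGroup.of 1 * FreeGroup.of 0 * FreeGroup.of 1)⁻¹,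
   FreeGroup.of 1 *
     (FreeGroup.of 0 ^ (-3 : ℤ) * FreeGroup.of 1 * FreeGroup.of 0 ^ (3 : ℤ))⁻¹}

/-- The virtual knot group `G₃`. -/
def G3 : Type :=
  PresentedGroup G3Rels

instance : Group G3 := by unfold G3; infer_instance

namespace G3Aux

/-! ### The circular-order argument -/

/-- Core contradiction: in a circularly ordered group there is no "quaternionic"
configuration `u² = v² = z`, `z² = 1`, `vu = z(uv)` with `u, v, z` positioned as below. -/
theorem core {G : Type u} [Group G] (c : G → G → G → ℤ)
    (hr : ∀ g₁ g₂ g₃ : G, c g₁ g₂ g₃ = -1 ∨ c g₁ g₂ g₃ = 0 ∨ c g₁ g₂ g₃ = 1)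
    (h0 : ∀ g₁ g₂ g₃ : G, c g₁ g₂ g₃ = 0 ↔ g₁ = g₂ ∨ g₁ = g₃ ∨ g₂ = g₃)
    (hcoc : ∀ g₁ g₂ g₃ g₄ : G, c g₂ g₃ g₄ - c g₁ g₃ g₄ + c g₁ g₂ g₄ - c g₁ g₂ g₃ = 0)
    (hinv : ∀ h g₁ g₂ g₃ : G, c g₁ g₂ g₃ = c (h * g₁) (h * g₂) (h * g₃))
    {u v z : G} (hu : u * u = z) (hv : v * v = z) (hz : z * z = 1)
    (hvu : v * u = z * (u * v))
    (h1 : c 1 u z = 1) (h2 : c 1 v z = 1) (h3 : c 1 u v = 1) : False := by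
  have huz : u * z = z * u := by rw [← hu]; group
  have key : u * (v * u) = v := by
    calc u * (v * u) = u * (z * (u * v)) := by rw [hvu]
      _ = (u * z) * (u * v) := by group
      _ = (z * u) * (u * v) := by rw [huz]
      _ = z * ((u * u) * v) := by group
      _ = z * (z * v) := by rw [hu]
      _ = (z * z) * v := by group
      _ = 1 * v := by rw [hz]
      _ = v := one_mul v
  have d1 : c v (v * u) z = 1 := by
    have e := hinv v 1 u v
    rw [mul_one, hv] at e
    rw [← e]; exact h3
  have dA : c 1 (v * u) z = 1 := by
    have e := hcoc 1 v (v * u) z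
    rw [d1, h2] at e
    rcases hr 1 (v * u) z with h | h | h <;> rcases hr 1 v (v * u) with h' | h' | h' <;>
      linarith
  have dB : c 1 v (v * u) = 1 := by
    have e := hcoc 1 v (v * u) z
    rw [d1, h2] at e
    rcases hr 1 (v * u) z with h | h | h <;> rcases hr 1 v (v * u) with h' | h' | h' <;>
      linarith
  have d3 : c 1 u (v * u) = 1 := by
    have e := hcoc 1 u v (v * u)
    rw [dB, h3] at e
    rcases hr u v (v * u) with h | h | h <;> rcases hr 1 u (v * u) with h' | h' | h' <;>
      linarith
  have d4 : c u z v = 1 := by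
    have e := hinv u 1 u (v * u)
    rw [mul_one, hu, key] at e
    rw [← e]; exact d3
  have d5 : c u v z = 1 := by
    have e := hcoc 1 u v z
    rw [h1, h2, h3] at e
    linarith
  have d6 := hcoc u z v z
  have z1 : c z v z = 0 := (h0 z v z).mpr (Or.inr (Or.inl rfl))
  have z2 : c u z z = 0 := (h0 u z z).mpr (Or.inr (Or.inr rfl))
  rw [z1, z2, d4, d5] at d6
  norm_num at d6

/-- A circularly orderable group contains no quaternionic configuration. -/
theorem quat_not_co {G : Type u} [Group G] (hco : IsCircularlyOrderable G)
    {a b z : G} (ha2 : a * a = z) (hb2 : b * b = z) (hz2 : z * z = 1)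
    (hba : b * a = z * (a * b))
    (na1 : a ≠ 1) (nb1 : b ≠ 1) (nz1 : z ≠ 1) (naz : a ≠ z) (nbz : b ≠ z)
    (nab : a ≠ b) (nazb : a ≠ z * b) (nzab : z * a ≠ b) : False := by
  obtain ⟨c, hr, h0, hcoc, hinv⟩ := hco
  have swap12 : ∀ p q r : G, c q p r = - c p q r := by
    intro p q r
    have h := hcoc q p q r
    have e1 : c q q r = 0 := (h0 q q r).mpr (Or.inl rfl)
    have e2 : c q p q = 0 := (h0 q p q).mpr (Or.inr (Or.inl rfl))
    linarith
  have swap23 : ∀ p q r : G, c p r q = - c p q r := by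
    intro p q r
    have h := hcoc p q r q
    have e1 : c q r q = 0 := (h0 q r q).mpr (Or.inr (Or.inl rfl))
    have e2 : c p q q = 0 := (h0 p q q).mpr (Or.inr (Or.inr rfl))
    linarith
  have nzc : ∀ p q r : G, p ≠ q → p ≠ r → q ≠ r → c p q r ≠ 0 := by
    intro p q r e1 e2 e3 h
    rcases (h0 p q r).mp h with e | e | e <;> [exact e1 e; exact e2 e; exact e3 e]
  have haz : a * z = z * a := by rw [← ha2]; group
  have hbz : b * z = z * b := by
    rw [← ha2]
    calc b * (a * a) = (b * a) * a := by group
      _ = (z * (a * b)) * a := by rw [hba]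
      _ = z * (a * (b * a)) := by group
      _ = z * (a * (z * (a * b))) := by rw [hba]
      _ = z * ((a * z) * (a * b)) := by group
      _ = z * ((z * a) * (a * b)) := by rw [haz]
      _ = (z * z) * ((a * a) * b) := by group
      _ = 1 * ((a * a) * b) := by rw [hz2]
      _ = (a * a) * b := by group
  have flip : ∀ g : G, c 1 (z * g) z = - c 1 g z := by
    intro g
    have e := hinv z 1 (z * g) z
    have e2 : z * (z * g) = g := by rw [← mul_assoc, hz2, one_mul]
    rw [mul_one, hz2, e2] at e
    have s1 := swap12 g z 1
    have s2 := swap23 g 1 z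
    have s3 := swap12 1 g z
    linarith
  have hzinv : z⁻¹ = z := inv_eq_of_mul_eq_one_right hz2
  -- squares of the translates
  have haa2 : (z * a) * (z * a) = z := by
    calc (z * a) * (z * a) = z * ((a * z) * a) := by group
      _ = z * ((z * a) * a) := by rw [haz]
      _ = (z * z) * (a * a) := by group
      _ = 1 * z := by rw [hz2, ha2]
      _ = z := one_mul z
  have hbb2 : (z * b) * (z * b) = z := by
    calc (z * b) * (z * b) = z * ((b * z) * b) := by group
      _ = z * ((z * b) * b) := by rw [hbz]
      _ = (z * z) * (b * b) := by group
      _ = 1 * z := by rw [hz2, hb2]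
      _ = z := one_mul z
  -- commutation relations for the translates
  have hba2 : (z * b) * a = z * (a * (z * b)) := by
    calc (z * b) * a = z * (b * a) := by group
      _ = z * (z * (a * b)) := by rw [hba]
      _ = z * ((z * a) * b) := by group
      _ = z * ((a * z) * b) := by rw [← haz]
      _ = z * (a * (z * b)) := by group
  have hba3 : b * (z * a) = z * ((z * a) * b) := by
    calc b * (z * a) = (b * z) * a := by group
      _ = (z * b) * a := by rw [hbz]
      _ = z * (b * a) := by group
      _ = z * (z * (a * b)) := by rw [hba]
      _ = z * ((z * a) * b) := by group
  have hba4 : (z * b) * (z * a) = z * ((z * a) * (z * b)) := by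
    calc (z * b) * (z * a) = z * ((b * z) * a) := by group
      _ = z * ((z * b) * a) := by rw [hbz]
      _ = (z * z) * (b * a) := by group
      _ = 1 * (b * a) := by rw [hz2]
      _ = b * a := by group
      _ = z * (a * b) := by rw [hba]
      _ = z * ((a * z) * (z⁻¹ * b)) := by group
      _ = z * ((z * a) * (z⁻¹ * b)) := by rw [haz]
      _ = z * ((z * a) * (z * b)) := by rw [hzinv]
  -- nontriviality of the translates
  have nza1 : z * a ≠ 1 := fun h =>
    naz ((eq_inv_of_mul_eq_one_right h).trans hzinv)
  have nzb1 : z * b ≠ 1 := fun h =>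
    nbz ((eq_inv_of_mul_eq_one_right h).trans hzinv)
  have nzazb : z * a ≠ z * b := fun h => nab (mul_left_cancel h)
  -- the main symmetric contradiction
  have main : ∀ u v : G, u * u = z → v * v = z → v * u = z * (u * v) →
      u ≠ 1 → v ≠ 1 → u ≠ v → c 1 u z = 1 → c 1 v z = 1 → False := by
    intro u v huu hvv hvu nu1 nv1 nuv hu1 hv1
    rcases hr 1 u v with h | h | h
    · have huv : u * v = z * (v * u) := by
        rw [hvu, ← mul_assoc, hz2, one_mul]
      have h3' : c 1 v u = 1 := by
        have := swap23 1 u v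
        linarith
      exact core c hr h0 hcoc hinv hvv huu hz2 huv hv1 hu1 h3'
    · exact absurd h (nzc 1 u v (Ne.symm nu1) (Ne.symm nv1) nuv)
    · exact core c hr h0 hcoc hinv huu hvv hz2 hvu hu1 hv1 h
  -- choice of sides
  have cu : c 1 a z = 1 ∨ c 1 (z * a) z = 1 := by
    rcases hr 1 a z with h | h | h
    · exact Or.inr (by rw [flip a, h]; norm_num)
    · exact absurd h (nzc 1 a z (Ne.symm na1) (Ne.symm nz1) naz)
    · exact Or.inl h
  have cv : c 1 b z = 1 ∨ c 1 (z * b) z = 1 := by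
    rcases hr 1 b z with h | h | h
    · exact Or.inr (by rw [flip b, h]; norm_num)
    · exact absurd h (nzc 1 b z (Ne.symm nb1) (Ne.symm nz1) nbz)
    · exact Or.inl h
  rcases cu with hu1 | hu1 <;> rcases cv with hv1 | hv1
  · exact main a b ha2 hb2 hba na1 nb1 nab hu1 hv1
  · exact main a (z * b) ha2 hbb2 hba2 na1 nzb1 nazb hu1 hv1
  · exact main (z * a) b haa2 hb2 hba3 nza1 nb1 nzab hu1 hv1
  · exact main (z * a) (z * b) haa2 hbb2 hba4 nza1 nzb1 nzazb hu1 hv1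

abbrev SL23 := Matrix.SpecialLinearGroup (Fin 2) (ZMod 3)

instance : DecidableEq SL23 := fun a b =>
  decidable_of_iff (a.1 = b.1) Subtype.ext_iff.symm

def X : SL23 := ⟨!![1,1;0,1], by decide⟩
def Y : SL23 := ⟨!![1,0;2,1], by decide⟩

lemma X3 : X ^ (3:ℤ) = 1 := by
  rw [show (3:ℤ) = ((3:ℕ):ℤ) from rfl, zpow_natCast]; decide

lemma relsOK : ∀ r ∈ G3Rels, FreeGroup.lift (![X, Y]) r = 1 := by
  intro r hr
  simp only [G3Rels, Set.mem_insert_iff, Set.mem_singleton_iff] at hr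
  rcases hr with rfl | rfl
  · simp only [map_mul, map_inv, FreeGroup.lift_apply_of, Matrix.cons_val_zero, Matrix.cons_val_one,
      Matrix.head_cons]
    rw [mul_inv_eq_one]; decide
  · simp only [map_mul, map_inv, map_zpow, FreeGroup.lift_apply_of, Matrix.cons_val_zero,
      Matrix.cons_val_one, Matrix.head_cons]
    rw [mul_inv_eq_one, zpow_neg, X3, inv_one, one_mul, mul_one]

def phi : G3 →* SL23 := PresentedGroup.toGroup relsOK

def xg : G3 := PresentedGroup.of 0
def yg : G3 := PresentedGroup.of 1

lemma phix : phi xg = X := by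
  show PresentedGroup.toGroup relsOK (PresentedGroup.of 0) = X
  rw [PresentedGroup.toGroup.of]; rfl

lemma phiy : phi yg = Y := by
  show PresentedGroup.toGroup relsOK (PresentedGroup.of 1) = Y
  rw [PresentedGroup.toGroup.of]; rfl

lemma hrel : ∀ r ∈ G3Rels, (PresentedGroup.mk G3Rels r : G3) = 1 := fun r hr =>
  (QuotientGroup.eq_one_iff r).mpr (Subgroup.subset_normalClosure hr)

lemma hx : xg * yg * xg = yg * xg * yg := by
  have h := hrel _ (Set.mem_insert _ _)
  rw [map_mul, map_mul, map_inv, map_mul, map_mul, mul_inv_eq_one] at h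
  exact h

lemma he2 : yg = xg ^ (-3:ℤ) * yg * xg ^ (3:ℤ) := by
  have h := hrel _ (Set.mem_insert_of_mem _ rfl)
  rw [map_mul, map_inv, map_mul, map_mul, map_zpow, map_zpow, mul_inv_eq_one] at h
  exact h

lemma hp3 : xg ^ (3:ℤ) = xg*xg*xg := by
  rw [show (3:ℤ) = ((3:ℕ):ℤ) from rfl, zpow_natCast, pow_succ, pow_succ, pow_one]

lemma he2' : yg = (xg*xg*xg)⁻¹ * yg * (xg*xg*xg) := by
  have h := he2
  rw [zpow_neg, hp3] at h
  exact h

lemma hc : xg*xg*xg*yg = yg*(xg*xg*xg) := by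
  calc xg*xg*xg*yg = xg*xg*xg*((xg*xg*xg)⁻¹ * yg * (xg*xg*xg)) := by rw [← he2']
    _ = yg*(xg*xg*xg) := by group

-- local notation
local notation "x" => xg
local notation "y" => yg

lemma c1 : y*x*y⁻¹ = x⁻¹*y*x := by
  calc y*x*y⁻¹ = x⁻¹*(x*y*x)*y⁻¹ := by group
    _ = x⁻¹*(y*x*y)*y⁻¹ := by rw [hx]
    _ = x⁻¹*y*x := by group

lemma c2 : y⁻¹*x*y = x*y*x⁻¹ := by
  calc y⁻¹*x*y = y⁻¹*(x*y*x)*x⁻¹ := by group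
    _ = y⁻¹*(y*x*y)*x⁻¹ := by rw [hx]
    _ = x*y*x⁻¹ := by group

lemma c1'' : y*x⁻¹ = x⁻¹*(y⁻¹*x*y) := by rw [c2]; group

lemma hbx : (x*y*x)*x = y*(x*y*x) := by
  conv_lhs => rw [hx]
  group

lemma hby : (x*y*x)*y = x*(x*y*x) := by
  conv_rhs => rw [hx]
  group

lemma hbyinv : (x*y*x)*y⁻¹ = x⁻¹*(x*y*x) := by
  calc (x*y*x)*y⁻¹ = x⁻¹*(x*(x*y*x))*y⁻¹ := by group
    _ = x⁻¹*((x*y*x)*y)*y⁻¹ := by rw [hby]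
    _ = x⁻¹*(x*y*x) := by group

lemma hzb : (x*x*x)*(x*y*x) = (x*y*x)*(x*x*x) := by
  calc (x*x*x)*(x*y*x) = x*((x*x*x)*y)*x := by group
    _ = x*(y*(x*x*x))*x := by rw [hc]
    _ = (x*y*x)*(x*x*x) := by group

lemma hyb : y = ((x*y*x)*x)*(x*y*x)⁻¹ := by rw [hbx]; group

lemma hy3 : y*y*y = x*x*x := by
  calc y*y*y
      = (((x*y*x)*x)*(x*y*x)⁻¹)*(((x*y*x)*x)*(x*y*x)⁻¹)*(((x*y*x)*x)*(x*y*x)⁻¹) := by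
        rw [← hyb]
    _ = (x*y*x)*(x*x*x)*(x*y*x)⁻¹ := by group
    _ = ((x*x*x)*(x*y*x))*(x*y*x)⁻¹ := by rw [← hzb]
    _ = x*x*x := by group

lemma hy3inv : y⁻¹*y⁻¹*y⁻¹ = x⁻¹*x⁻¹*x⁻¹ := by
  rw [show y⁻¹*y⁻¹*y⁻¹ = (y*y*y)⁻¹ from by group, hy3]; group

lemma hyinv : y⁻¹ = y*y*(x*x*x)⁻¹ := by rw [← hy3]; group

lemma h2id : x*y⁻¹*x*y⁻¹ = y⁻¹*x*y⁻¹*x := by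
  calc x*y⁻¹*x*y⁻¹
      = x*(y⁻¹*x*y)*(y⁻¹*y⁻¹) := by group
    _ = x*(x*y*x⁻¹)*(y⁻¹*y⁻¹) := by rw [c2]
    _ = x*x*y*x⁻¹*(y*(y⁻¹*y⁻¹*y⁻¹)) := by group
    _ = x*x*y*x⁻¹*(y*(x⁻¹*x⁻¹*x⁻¹)) := by rw [hy3inv]
    _ = x*x*(y*x⁻¹)*(y*x⁻¹)*(x⁻¹*x⁻¹) := by group
    _ = x*x*(x⁻¹*(y⁻¹*x*y))*(x⁻¹*(y⁻¹*x*y))*(x⁻¹*x⁻¹) := by rw [c1'']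
    _ = x*y⁻¹*(x*y*x⁻¹)*(y⁻¹*x*y)*(x⁻¹*x⁻¹) := by group
    _ = x*y⁻¹*(y⁻¹*x*y)*(y⁻¹*x*y)*(x⁻¹*x⁻¹) := by rw [← c2]
    _ = x*(y*(y⁻¹*y⁻¹*y⁻¹))*x*x*y*(x⁻¹*x⁻¹) := by group
    _ = x*(y*(x⁻¹*x⁻¹*x⁻¹))*x*x*y*(x⁻¹*x⁻¹) := by rw [hy3inv]
    _ = (x*y*x⁻¹)*y*(x⁻¹*x⁻¹) := by group
    _ = (y⁻¹*x*y)*y*(x⁻¹*x⁻¹) := by rw [← c2]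
    _ = (y*y*(y⁻¹*y⁻¹*y⁻¹))*x*(y*y)*(x⁻¹*x⁻¹) := by group
    _ = (y*y*(x⁻¹*x⁻¹*x⁻¹))*x*(y*y)*(x⁻¹*x⁻¹) := by rw [hy3inv]
    _ = y⁻¹*x*y⁻¹*x := by rw [hyinv]; group

lemma commx : x*(x*y⁻¹*x*y⁻¹) = (x*y⁻¹*x*y⁻¹)*x := by
  conv_lhs => rw [h2id]
  group

lemma commy : y*(x*y⁻¹*x*y⁻¹) = (x*y⁻¹*x*y⁻¹)*y := by
  conv_lhs => rw [h2id]
  group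

lemma commb : (x*y*x)*((x*y⁻¹)*(x*y⁻¹)) = ((x*y⁻¹)*(x*y⁻¹))*(x*y*x) := by
  calc (x*y*x)*((x*y⁻¹)*(x*y⁻¹)) = x*y*(x*(x*y⁻¹*x*y⁻¹)) := by group
    _ = x*y*((x*y⁻¹*x*y⁻¹)*x) := by rw [commx]
    _ = x*(y*(x*y⁻¹*x*y⁻¹))*x := by group
    _ = x*((x*y⁻¹*x*y⁻¹)*y)*x := by rw [commy]
    _ = x*(x*y⁻¹*x*y⁻¹)*(y*x) := by group
    _ = (x*y⁻¹*x*y⁻¹)*x*(y*x) := by rw [commx]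
    _ = ((x*y⁻¹)*(x*y⁻¹))*(x*y*x) := by group

lemma hba' : (x*y*x)*(x*y⁻¹) = (y*x⁻¹)*(x*y*x) := by
  calc (x*y*x)*(x*y⁻¹) = ((x*y*x)*x)*y⁻¹ := by group
    _ = (y*(x*y*x))*y⁻¹ := by rw [hbx]
    _ = y*((x*y*x)*y⁻¹) := by group
    _ = y*(x⁻¹*(x*y*x)) := by rw [hbyinv]
    _ = (y*x⁻¹)*(x*y*x) := by group

lemma e1 : (x*y*x)*((x*y⁻¹)*(x*y⁻¹)) = ((y*x⁻¹)*(y*x⁻¹))*(x*y*x) := by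
  calc (x*y*x)*((x*y⁻¹)*(x*y⁻¹)) = ((x*y*x)*(x*y⁻¹))*(x*y⁻¹) := by group
    _ = ((y*x⁻¹)*(x*y*x))*(x*y⁻¹) := by rw [hba']
    _ = (y*x⁻¹)*((x*y*x)*(x*y⁻¹)) := by group
    _ = (y*x⁻¹)*((y*x⁻¹)*(x*y*x)) := by rw [hba']
    _ = ((y*x⁻¹)*(y*x⁻¹))*(x*y*x) := by group

lemma e2 : (x*y⁻¹)*(x*y⁻¹) = (y*x⁻¹)*(y*x⁻¹) :=
  mul_right_cancel (commb.symm.trans e1)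

lemma F3 : ((x*y⁻¹)*(x*y⁻¹))*((x*y⁻¹)*(x*y⁻¹)) = 1 := by
  nth_rewrite 2 [e2]
  group

lemma F2 : (y⁻¹*x)*(y⁻¹*x) = (x*y⁻¹)*(x*y⁻¹) := by
  calc (y⁻¹*x)*(y⁻¹*x) = y⁻¹*x*y⁻¹*x := by group
    _ = x*y⁻¹*x*y⁻¹ := h2id.symm
    _ = (x*y⁻¹)*(x*y⁻¹) := by group

lemma hT : y*x⁻¹*(y*y) = x⁻¹*(y*y)*x := by
  calc y*x⁻¹*(y*y) = y*x⁻¹*(y*y*y)*y⁻¹ := by group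
    _ = y*x⁻¹*(x*x*x)*y⁻¹ := by rw [hy3]
    _ = (y*x*y⁻¹)*(y*x*y⁻¹) := by group
    _ = (x⁻¹*y*x)*(x⁻¹*y*x) := by rw [c1]
    _ = x⁻¹*(y*y)*x := by group

lemma hBA : (y⁻¹*x)*(x*y⁻¹) = (y*x⁻¹)*(y⁻¹*x) := by
  calc (y⁻¹*x)*(x*y⁻¹)
      = (y*y*(y⁻¹*y⁻¹*y⁻¹))*x*x*(y*y*(y⁻¹*y⁻¹*y⁻¹)) := by group
    _ = (y*y*(x⁻¹*x⁻¹*x⁻¹))*x*x*(y*y*(x⁻¹*x⁻¹*x⁻¹)) := by rw [hy3inv]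
    _ = y*(y*x⁻¹*(y*y))*(x⁻¹*x⁻¹*x⁻¹) := by group
    _ = y*(x⁻¹*(y*y)*x)*(x⁻¹*x⁻¹*x⁻¹) := by rw [hT]
    _ = (y*x⁻¹)*(y⁻¹*x) := by rw [hyinv]; group

lemma F4 : (y⁻¹*x)*(x*y⁻¹) = ((x*y⁻¹)*(x*y⁻¹))*((x*y⁻¹)*(y⁻¹*x)) := by
  rw [hBA]
  calc (y*x⁻¹)*(y⁻¹*x)
      = (y*x⁻¹)*(((x*y⁻¹)*(x*y⁻¹))*((x*y⁻¹)*(x*y⁻¹)))*(y⁻¹*x) := by rw [F3]; group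
    _ = ((x*y⁻¹)*(x*y⁻¹))*((x*y⁻¹)*(y⁻¹*x)) := by group

end G3Aux

namespace G3Aux

def Yi : SL23 := ⟨!![1,0;1,1], by decide⟩

lemma hYi : Y⁻¹ = Yi := inv_eq_of_mul_eq_one_right (by decide)

lemma ne_of_phi : ∀ g h : G3, phi g ≠ phi h → g ≠ h :=
  fun _ _ hn e => hn (congrArg phi e)

end G3Aux

/-- The virtual knot group `G₃ = ⟨x, y | x y x = y x y, y = x⁻³ y x³⟩`
is not circularly orderable. -/
theorem G3_not_circularlyOrderable : ¬ IsCircularlyOrderable G3 := by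
  intro hco
  refine G3Aux.quat_not_co hco (a := G3Aux.xg*G3Aux.yg⁻¹) (b := G3Aux.yg⁻¹*G3Aux.xg)
    (z := (G3Aux.xg*G3Aux.yg⁻¹)*(G3Aux.xg*G3Aux.yg⁻¹)) rfl G3Aux.F2 G3Aux.F3 G3Aux.F4
    ?_ ?_ ?_ ?_ ?_ ?_ ?_ ?_
  · exact G3Aux.ne_of_phi _ _ (by
      simp only [map_mul, map_inv, map_one, G3Aux.phix, G3Aux.phiy, G3Aux.hYi]; decide)
  · exact G3Aux.ne_of_phi _ _ (by
      simp only [map_mul, map_inv, map_one, G3Aux.phix, G3Aux.phiy, G3Aux.hYi]; decide)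
  · exact G3Aux.ne_of_phi _ _ (by
      simp only [map_mul, map_inv, map_one, G3Aux.phix, G3Aux.phiy, G3Aux.hYi]; decide)
  · exact G3Aux.ne_of_phi _ _ (by
      simp only [map_mul, map_inv, map_one, G3Aux.phix, G3Aux.phiy, G3Aux.hYi]; decide)
  · exact G3Aux.ne_of_phi _ _ (by
      simp only [map_mul, map_inv, map_one, G3Aux.phix, G3Aux.phiy, G3Aux.hYi]; decide)
  · exact G3Aux.ne_of_phi _ _ (by
      simp only [map_mul, map_inv, map_one, G3Aux.phix, G3Aux.phiy, G3Aux.hYi]; decide)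
  · exact G3Aux.ne_of_phi _ _ (by
      simp only [map_mul, map_inv, map_one, G3Aux.phix, G3Aux.phiy, G3Aux.hYi]; decide)
  · exact G3Aux.ne_of_phi _ _ (by
      simp only [map_mul, map_inv, map_one, G3Aux.phix, G3Aux.phiy, G3Aux.hYi]; decide)
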